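/- arXiv:2209.05824 — 3 statements merged into one kernel-verified Lean document; each statement's English description precedes it below -/
import Mathlib

section
/- Consider the PnP model: R° ∈ SO(3), t° ∈ ℝ³, deterministic points (pᵢ)_{i∈ℕ} ⊂ ℝ³ with ‖pᵢ‖ ≤ K and depths dᵢ = e₃ᵀ(R°pᵢ + t°) ≥ δ for constants K, δ > 0, and observations qᵢ' = W E (R°pᵢ + t°)/dᵢ + εᵢ, where the scalar noise coordinates ε_{i,j} (i ∈ ℕ, j ∈ {1,2}) are mutually independent identically distributed real random variables with mean 0, variance σ², and finite fourth moment. Then (1/n)(Aₙᵀ Aₙ − Bₙᵀ Bₙ) − σ² (1/n) Gₙᵀ Gₙ converges in probability to the zero 11×11 matrix as n → ∞. -/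
open MeasureTheory ProbabilityTheory Matrix Finset

/-- `W = diag(f_x, f_y)`. -/
def Wmat (fx fy : ℝ) : Matrix (Fin 2) (Fin 2) ℝ := Matrix.diagonal ![fx, fy]

/-- `E = [e₁ e₂]ᵀ ∈ ℝ^{2×3}`, whose rows are the first two standard basis vectors of `ℝ³`. -/
def Emat : Matrix (Fin 2) (Fin 3) ℝ := Matrix.of fun i j => if (i : ℕ) = (j : ℕ) then 1 else 0

/-- Row `2i−1` of `A`: `[−u(pᵢ−p̄)ᵀ, f_x pᵢᵀ, f_x, 0_{1×4}]`. -/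
def rowU (fx u : ℝ) (p pbar : Fin 3 → ℝ) : Fin 11 → ℝ := fun k =>
  if h : (k : ℕ) < 3 then -u * (p ⟨k, h⟩ - pbar ⟨k, h⟩)
  else if h2 : (k : ℕ) < 6 then fx * p ⟨(k : ℕ) - 3, by omega⟩
  else if (k : ℕ) = 6 then fx else 0

/-- Row `2i` of `A`: `[−v(pᵢ−p̄)ᵀ, 0_{1×4}, f_y pᵢᵀ, f_y]`. -/
def rowV (fy v : ℝ) (p pbar : Fin 3 → ℝ) : Fin 11 → ℝ := fun k =>
  if h : (k : ℕ) < 3 then -v * (p ⟨k, h⟩ - pbar ⟨k, h⟩)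
  else if (k : ℕ) < 7 then 0
  else if h2 : (k : ℕ) < 10 then fy * p ⟨(k : ℕ) - 7, by omega⟩ else fy

/-- The pair of rows of `A` (or `B`) associated with a point `p` and observation `q = (u,v)ᵀ`. -/
def Arow (fx fy : ℝ) (q : Fin 2 → ℝ) (p pbar : Fin 3 → ℝ) : Fin 2 → Fin 11 → ℝ :=
  ![rowU fx (q 0) p pbar, rowV fy (q 1) p pbar]

/-- The row `[−(pᵢ−p̄)ᵀ, 0_{1×8}]` of `G` (repeated twice per point). -/
def Grow (p pbar : Fin 3 → ℝ) : Fin 11 → ℝ := fun k =>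
  if h : (k : ℕ) < 3 then -(p ⟨k, h⟩ - pbar ⟨k, h⟩) else 0

/-- The Frobenius norm of a real `11×11` matrix. -/
noncomputable def frobNorm11 (M : Matrix (Fin 11) (Fin 11) ℝ) : ℝ :=
  Real.sqrt (∑ i, ∑ j, (M i j) ^ 2)

/-!
Write `Aₙ = Bₙ + diag(ε) Gₙ`. Then every entry of `AₙᵀAₙ − BₙᵀBₙ − σ² GₙᵀGₙ` is a sum over the
`2n` rows of terms `a_r ε_r + b_r (ε_r² − σ²)`, whose coefficients are bounded uniformly in `n`
because the points, their centroids and the noise-free projections (depths `≥ δ`) are bounded.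
These terms are pairwise independent and centred, with variances bounded through the fourth
moment, so by Chebyshev each entry of the normalised matrix exceeds `η / 11` with probability
`O(1/n)`; a union bound over the `121` entries controls the Frobenius norm.
-/

lemma rowU_add (fx u e : ℝ) (p pbar : Fin 3 → ℝ) (k : Fin 11) :
    rowU fx (u + e) p pbar k = rowU fx u p pbar k + e * Grow p pbar k := by
  unfold rowU Grow; split_ifs <;> ring

lemma rowV_add (fy v e : ℝ) (p pbar : Fin 3 → ℝ) (k : Fin 11) :
    rowV fy (v + e) p pbar k = rowV fy v p pbar k + e * Grow p pbar k := by
  unfold rowV Grow; split_ifs <;> ring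

lemma Arow_add (fx fy : ℝ) (q e : Fin 2 → ℝ) (p pbar : Fin 3 → ℝ) (j : Fin 2) (k : Fin 11) :
    Arow fx fy (q + e) p pbar j k = Arow fx fy q p pbar j k + e j * Grow p pbar k := by
  fin_cases j
  exacts [rowU_add fx (q 0) (e 0) p pbar k, rowV_add fy (q 1) (e 1) p pbar k]

section EntryBounds

variable {K : ℝ} {p pbar : Fin 3 → ℝ}

lemma abs_apply_sub_apply_le (hp : ‖p‖ ≤ K) (hpbar : ‖pbar‖ ≤ K) (m : Fin 3) :
    |p m - pbar m| ≤ 2 * K :=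
  calc |p m - pbar m| ≤ ‖p - pbar‖ := norm_le_pi_norm (p - pbar) m
    _ ≤ 2 * K := by linarith [norm_sub_le p pbar]

lemma abs_Grow_le (hp : ‖p‖ ≤ K) (hpbar : ‖pbar‖ ≤ K) (k : Fin 11) :
    |Grow p pbar k| ≤ 2 * K := by
  have hK : 0 ≤ K := (norm_nonneg p).trans hp
  unfold Grow; split_ifs
  · rw [abs_neg]; exact abs_apply_sub_apply_le hp hpbar _
  · simpa using hK

lemma abs_rowU_le {f u Q : ℝ} (hu : |u| ≤ Q) (hp : ‖p‖ ≤ K) (hpbar : ‖pbar‖ ≤ K) (k : Fin 11) :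
    |rowU f u p pbar k| ≤ Q * (2 * K) + |f| * (K + 1) := by
  have hK : 0 ≤ K := (norm_nonneg p).trans hp
  have hQ : 0 ≤ Q := (abs_nonneg u).trans hu
  unfold rowU; split_ifs with h
  · rw [abs_mul, abs_neg]
    linarith [mul_le_mul hu (abs_apply_sub_apply_le hp hpbar ⟨k, h⟩) (abs_nonneg _) hQ,
      mul_nonneg (abs_nonneg f) (by linarith : 0 ≤ K + 1)]
  · rw [abs_mul]
    refine le_add_of_nonneg_of_le (by positivity) ?_
    gcongr
    exact ((norm_le_pi_norm p _).trans hp).trans (by linarith)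
  · nlinarith [abs_nonneg f]
  · simp only [abs_zero]; positivity

lemma abs_rowV_le {f v Q : ℝ} (hv : |v| ≤ Q) (hp : ‖p‖ ≤ K) (hpbar : ‖pbar‖ ≤ K) (k : Fin 11) :
    |rowV f v p pbar k| ≤ Q * (2 * K) + |f| * (K + 1) := by
  have hK : 0 ≤ K := (norm_nonneg p).trans hp
  have hQ : 0 ≤ Q := (abs_nonneg v).trans hv
  unfold rowV; split_ifs with h
  · rw [abs_mul, abs_neg]
    linarith [mul_le_mul hv (abs_apply_sub_apply_le hp hpbar ⟨k, h⟩) (abs_nonneg _) hQ,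
      mul_nonneg (abs_nonneg f) (by linarith : 0 ≤ K + 1)]
  · simp only [abs_zero]; positivity
  · rw [abs_mul]
    refine le_add_of_nonneg_of_le (by positivity) ?_
    gcongr
    exact ((norm_le_pi_norm p _).trans hp).trans (by linarith)
  · nlinarith [abs_nonneg f]

lemma abs_Arow_le {fx fy Q : ℝ} {q : Fin 2 → ℝ} (hq : ‖q‖ ≤ Q) (hp : ‖p‖ ≤ K)
    (hpbar : ‖pbar‖ ≤ K) (j : Fin 2) (k : Fin 11) :
    |Arow fx fy q p pbar j k| ≤ Q * (2 * K) + max |fx| |fy| * (K + 1) := by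
  have hK : 0 ≤ K + 1 := by linarith [(norm_nonneg p).trans hp]
  have hqj (j : Fin 2) : |q j| ≤ Q := (norm_le_pi_norm q j).trans hq
  fin_cases j
  · refine (abs_rowU_le (hqj 0) hp hpbar k).trans ?_
    gcongr; exact le_max_left _ _
  · refine (abs_rowV_le (hqj 1) hp hpbar k).trans ?_
    gcongr; exact le_max_right _ _

end EntryBounds

lemma norm_inv_natCast_smul_sum_range_le {E : Type*} [SeminormedAddCommGroup E]
    [NormedSpace ℝ E] {v : ℕ → E} {K : ℝ} (hv : ∀ i, ‖v i‖ ≤ K) (n : ℕ) :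
    ‖(n : ℝ)⁻¹ • ∑ i ∈ range n, v i‖ ≤ K := by
  rcases n.eq_zero_or_pos with rfl | hn
  · simpa using (norm_nonneg _).trans (hv 0)
  have hsum : ‖∑ i ∈ range n, v i‖ ≤ n * K := by
    simpa using norm_sum_le_of_le (range n) fun i _ => hv i
  rw [norm_smul, norm_inv, Real.norm_natCast, inv_mul_le_iff₀ (by exact_mod_cast hn)]
  exact hsum

open scoped Matrix.Norms.Operator in
lemma exists_norm_inv_smul_mulVec_affine_le {ι m n : Type*} [Fintype m] [Fintype n]
    (M : Matrix m n ℝ) (R : Matrix n n ℝ) (t : n → ℝ) {p : ι → n → ℝ} {d : ι → ℝ} {K δ : ℝ}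
    (hδ : 0 < δ) (hp : ∀ i, ‖p i‖ ≤ K) (hd : ∀ i, δ ≤ d i) :
    ∃ Q, ∀ i, ‖(d i)⁻¹ • M *ᵥ (R *ᵥ p i + t)‖ ≤ Q := by
  refine ⟨δ⁻¹ * (‖M‖ * (‖R‖ * K + ‖t‖)), fun i => ?_⟩
  have hK : 0 ≤ K := (norm_nonneg _).trans (hp i)
  have hdi : 0 < d i := hδ.trans_le (hd i)
  rw [norm_smul, norm_inv, Real.norm_of_nonneg hdi.le]
  gcongr
  · exact hd i
  refine (linfty_opNorm_mulVec M _).trans ?_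
  gcongr
  refine (norm_add_le _ _).trans ?_
  gcongr
  exact (linfty_opNorm_mulVec R _).trans (by gcongr; exact hp i)

lemma transpose_mul_self_add_diagonal_mul_apply {ρ κ : Type*} [Fintype ρ] [DecidableEq ρ]
    (B G : Matrix ρ κ ℝ) (e : ρ → ℝ) (s : ℝ) (k l : κ) :
    ((B + diagonal e * G)ᵀ * (B + diagonal e * G) - Bᵀ * B - s • (Gᵀ * G)) k l =
      ∑ r, ((B r k * G r l + B r l * G r k) * e r + G r k * G r l * (e r ^ 2 - s)) := by
  simp only [Matrix.sub_apply, Matrix.smul_apply, mul_apply, transpose_apply, Matrix.add_apply,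
    diagonal_apply, ite_mul, zero_mul, Finset.sum_ite_eq, Finset.mem_univ, if_true, smul_eq_mul,
    Finset.mul_sum, ← Finset.sum_sub_distrib]
  exact Finset.sum_congr rfl fun r _ => by ring

section Chebyshev

variable {Ω : Type*} [MeasurableSpace Ω] {μ : Measure Ω}

lemma measure_le_abs_sum_le_of_pairwise_indepFun [IsFiniteMeasure μ] {ι : Type*} {s : Finset ι}
    {X : ι → Ω → ℝ} {V c : ℝ} (hX : ∀ a ∈ s, MemLp (X a) 2 μ)
    (hindep : Set.Pairwise ↑s fun a b => IndepFun (X a) (X b) μ)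
    (hmean : ∀ a ∈ s, μ[X a] = 0) (hvar : ∀ a ∈ s, variance (X a) μ ≤ V) (hc : 0 < c) :
    μ {ω | c ≤ |∑ a ∈ s, X a ω|} ≤ ENNReal.ofReal (#s * V / c ^ 2) := by
  have hmeanS : μ[∑ a ∈ s, X a] = 0 := by
    simp only [Finset.sum_apply]
    rw [integral_finsetSum s fun a ha => (hX a ha).integrable one_le_two]
    exact Finset.sum_eq_zero hmean
  have hvarS : variance (∑ a ∈ s, X a) μ ≤ #s * V := by
    rw [IndepFun.variance_sum hX hindep]
    simpa using Finset.sum_le_sum hvar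
  calc μ {ω | c ≤ |∑ a ∈ s, X a ω|}
      = μ {ω | c ≤ |(∑ a ∈ s, X a) ω - μ[∑ a ∈ s, X a]|} := by
        rw [hmeanS]; simp only [Finset.sum_apply, sub_zero]
    _ ≤ ENNReal.ofReal (variance (∑ a ∈ s, X a) μ / c ^ 2) :=
        meas_ge_le_variance_div_sq (memLp_finsetSum' s hX) hc
    _ ≤ ENNReal.ofReal (#s * V / c ^ 2) := by gcongr

variable {e : Ω → ℝ}

lemma memLp_two_sq_of_integrable_pow_four (he : AEStronglyMeasurable e μ)
    (h4 : Integrable (fun ω => e ω ^ 4) μ) : MemLp (fun ω => e ω ^ 2) 2 μ :=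
  (memLp_two_iff_integrable_sq (f := fun ω => e ω ^ 2) (he.pow 2)).2
    (by simpa only [← pow_mul] using h4)

lemma memLp_two_of_integrable_pow_four [IsFiniteMeasure μ] (he : AEStronglyMeasurable e μ)
    (h4 : Integrable (fun ω => e ω ^ 4) μ) : MemLp e 2 μ :=
  (memLp_two_iff_integrable_sq he).2
    ((memLp_two_sq_of_integrable_pow_four he h4).integrable one_le_two)

lemma memLp_two_mul_add_mul_sq_sub [IsFiniteMeasure μ] (he : AEStronglyMeasurable e μ)
    (h4 : Integrable (fun ω => e ω ^ 4) μ) (a b s : ℝ) :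
    MemLp (fun ω => a * e ω + b * (e ω ^ 2 - s)) 2 μ :=
  ((memLp_two_of_integrable_pow_four he h4).const_mul a).add
    (((memLp_two_sq_of_integrable_pow_four he h4).sub (memLp_const s)).const_mul b)

lemma integral_mul_add_mul_sq_sub_eq_zero [IsProbabilityMeasure μ] {σ : ℝ}
    (he : AEStronglyMeasurable e μ) (h4 : Integrable (fun ω => e ω ^ 4) μ)
    (hmean : ∫ ω, e ω ∂μ = 0) (hvar : ∫ ω, e ω ^ 2 ∂μ = σ ^ 2) (a b : ℝ) :
    ∫ ω, (a * e ω + b * (e ω ^ 2 - σ ^ 2)) ∂μ = 0 := by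
  have h2 : Integrable (fun ω => e ω ^ 2) μ :=
    (memLp_two_sq_of_integrable_pow_four he h4).integrable one_le_two
  have h2' : Integrable (fun ω => e ω ^ 2 - σ ^ 2) μ := h2.sub (integrable_const _)
  have h1 : Integrable e μ := (memLp_two_of_integrable_pow_four he h4).integrable one_le_two
  rw [integral_add (h1.const_mul a) (h2'.const_mul b),
    integral_const_mul, integral_const_mul, integral_sub h2 (integrable_const _), hmean, hvar]
  simp

lemma variance_mul_add_mul_sq_sub_le [IsProbabilityMeasure μ] {σ : ℝ}
    (he : AEStronglyMeasurable e μ) (h4 : Integrable (fun ω => e ω ^ 4) μ)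
    (hvar : ∫ ω, e ω ^ 2 ∂μ = σ ^ 2) (a b : ℝ) :
    variance (fun ω => a * e ω + b * (e ω ^ 2 - σ ^ 2)) μ
      ≤ 2 * a ^ 2 * σ ^ 2 + 2 * b ^ 2 * (∫ ω, e ω ^ 4 ∂μ + σ ^ 4) := by
  have h2 : Integrable (fun ω => e ω ^ 2) μ :=
    (memLp_two_sq_of_integrable_pow_four he h4).integrable one_le_two
  have h4' : Integrable (fun ω => e ω ^ 4 + σ ^ 4) μ := h4.add (integrable_const _)
  have hZ := memLp_two_mul_add_mul_sq_sub he h4 a b (σ ^ 2)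
  calc variance (fun ω => a * e ω + b * (e ω ^ 2 - σ ^ 2)) μ
      ≤ ∫ ω, (a * e ω + b * (e ω ^ 2 - σ ^ 2)) ^ 2 ∂μ := variance_le_expectation_sq hZ.1
    _ ≤ ∫ ω, (2 * a ^ 2 * e ω ^ 2 + 2 * b ^ 2 * (e ω ^ 4 + σ ^ 4)) ∂μ := by
        refine integral_mono hZ.integrable_sq ((h2.const_mul _).add (h4'.const_mul _)) fun ω => ?_
        -- `(x² - σ²)² ≤ x⁴ + σ⁴` because `x² σ² ≥ 0`
        nlinarith [sq_nonneg (a * e ω - b * (e ω ^ 2 - σ ^ 2)), sq_nonneg b,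
          mul_nonneg (sq_nonneg b) (mul_nonneg (sq_nonneg (e ω)) (sq_nonneg σ))]
    _ = 2 * a ^ 2 * σ ^ 2 + 2 * b ^ 2 * (∫ ω, e ω ^ 4 ∂μ + σ ^ 4) := by
        rw [integral_add (h2.const_mul _) (h4'.const_mul _), integral_const_mul,
          integral_const_mul, integral_add h4 (integrable_const _), hvar]
        simp

end Chebyshev

structure IsPairwiseIndepNoise {Ω ι : Type*} [MeasurableSpace Ω] (μ : Measure Ω) (σ m4 : ℝ)
    (e : ι → Ω → ℝ) : Prop where
  measurable : ∀ r, Measurable (e r)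
  pairwise_indepFun : Pairwise fun r r' => IndepFun (e r) (e r') μ
  integrable_pow_four : ∀ r, Integrable (fun ω => e r ω ^ 4) μ
  integral_pow_four_le : ∀ r, ∫ ω, e r ω ^ 4 ∂μ ≤ m4
  integral_eq_zero : ∀ r, ∫ ω, e r ω ∂μ = 0
  integral_sq : ∀ r, ∫ ω, e r ω ^ 2 ∂μ = σ ^ 2

namespace IsPairwiseIndepNoise

variable {Ω ι : Type*} [MeasurableSpace Ω] {μ : Measure Ω} {σ m4 : ℝ} {e : ι → Ω → ℝ}

lemma comp {ι' : Type*} (he : IsPairwiseIndepNoise μ σ m4 e) {f : ι' → ι}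
    (hf : Function.Injective f) : IsPairwiseIndepNoise μ σ m4 (e ∘ f) where
  measurable r := he.measurable (f r)
  pairwise_indepFun _ _ h := he.pairwise_indepFun (hf.ne h)
  integrable_pow_four r := he.integrable_pow_four (f r)
  integral_pow_four_le r := he.integral_pow_four_le (f r)
  integral_eq_zero r := he.integral_eq_zero (f r)
  integral_sq r := he.integral_sq (f r)

lemma measure_le_abs_sum_mul_add_mul_sq_sub_le [IsProbabilityMeasure μ] [Fintype ι]
    (he : IsPairwiseIndepNoise μ σ m4 e) {a b : ι → ℝ} {C c : ℝ} (ha : ∀ r, |a r| ≤ C)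
    (hb : ∀ r, |b r| ≤ C) (hc : 0 < c) :
    μ {ω | c ≤ |∑ r, (a r * e r ω + b r * (e r ω ^ 2 - σ ^ 2))|}
      ≤ ENNReal.ofReal (Fintype.card ι * (2 * C ^ 2 * (σ ^ 2 + m4 + σ ^ 4)) / c ^ 2) := by
  have hae r := (he.measurable r).aestronglyMeasurable (μ := μ)
  have hφ (r : ι) : Measurable fun x : ℝ => a r * x + b r * (x ^ 2 - σ ^ 2) := by fun_prop
  have hvar (r : ι) : variance (fun ω => a r * e r ω + b r * (e r ω ^ 2 - σ ^ 2)) μ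
      ≤ 2 * C ^ 2 * (σ ^ 2 + m4 + σ ^ 4) := by
    have ha2 : a r ^ 2 ≤ C ^ 2 := sq_le_sq' (abs_le.1 (ha r)).1 (abs_le.1 (ha r)).2
    have hb2 : b r ^ 2 ≤ C ^ 2 := sq_le_sq' (abs_le.1 (hb r)).1 (abs_le.1 (hb r)).2
    have h4 : 0 ≤ ∫ ω, e r ω ^ 4 ∂μ := integral_nonneg fun ω => by positivity
    refine (variance_mul_add_mul_sq_sub_le (hae r) (he.integrable_pow_four r)
      (he.integral_sq r) _ _).trans ?_
    nlinarith [mul_le_mul_of_nonneg_right ha2 (sq_nonneg σ),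
      mul_le_mul hb2 (add_le_add_right (he.integral_pow_four_le r) (σ ^ 4)) (by positivity)
        (sq_nonneg C)]
  simpa using measure_le_abs_sum_le_of_pairwise_indepFun (s := Finset.univ)
    (X := fun r ω => a r * e r ω + b r * (e r ω ^ 2 - σ ^ 2))
    (fun r _ => memLp_two_mul_add_mul_sq_sub (hae r) (he.integrable_pow_four r) _ _ _)
    (fun r _ r' _ h => (he.pairwise_indepFun h).comp (hφ r) (hφ r'))
    (fun r _ => integral_mul_add_mul_sq_sub_eq_zero (hae r) (he.integrable_pow_four r)
      (he.integral_eq_zero r) (he.integral_sq r) _ _)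
    (fun r _ => hvar r) hc

end IsPairwiseIndepNoise

lemma measure_lt_abs_noise_bias_apply_le {Ω ρ κ : Type*} [MeasurableSpace Ω] {μ : Measure Ω}
    [IsProbabilityMeasure μ] [Fintype ρ] [DecidableEq ρ] {B G : Matrix ρ κ ℝ} {C : ℝ}
    (hB : ∀ r k, |B r k| ≤ C) (hG : ∀ r k, |G r k| ≤ C) {e : ρ → Ω → ℝ} {σ m4 N c : ℝ}
    (he : IsPairwiseIndepNoise μ σ m4 e) (hN : 0 < N) (hc : 0 < c) (k l : κ) :
    μ {ω | c < |(N⁻¹ • ((B + diagonal (fun r => e r ω) * G)ᵀ * (B + diagonal (fun r => e r ω) * G)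
        - Bᵀ * B) - σ ^ 2 • (N⁻¹ • (Gᵀ * G))) k l|}
      ≤ ENNReal.ofReal
          (Fintype.card ρ * (2 * (2 * C ^ 2) ^ 2 * (σ ^ 2 + m4 + σ ^ 4)) / (N * c) ^ 2) := by
  have hprod (r : ρ) (k l : κ) : |B r k * G r l| ≤ C ^ 2 := by
    rw [abs_mul, sq]
    exact mul_le_mul (hB r k) (hG r l) (abs_nonneg _) ((abs_nonneg _).trans (hB r k))
  have hGG (r : ρ) : |G r k * G r l| ≤ 2 * C ^ 2 := by
    rw [abs_mul]
    nlinarith [mul_le_mul (hG r k) (hG r l) (abs_nonneg _) ((abs_nonneg _).trans (hG r k))]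
  refine (measure_mono fun ω hω => ?_).trans
    (he.measure_le_abs_sum_mul_add_mul_sq_sub_le (a := fun r => B r k * G r l + B r l * G r k)
      (b := fun r => G r k * G r l) (C := 2 * C ^ 2)
      (fun r => (abs_add_le _ _).trans (by linarith [hprod r k l, hprod r l k])) hGG
      (mul_pos hN hc))
  have hsmul : ∀ X Y Z : Matrix κ κ ℝ,
      N⁻¹ • (X - Y) - σ ^ 2 • (N⁻¹ • Z) = N⁻¹ • (X - Y - σ ^ 2 • Z) := fun X Y Z => by module
  simp only [Set.mem_ofPred_eq, hsmul, Matrix.smul_apply, transpose_mul_self_add_diagonal_mul_apply,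
    smul_eq_mul, abs_mul, abs_inv, abs_of_pos hN] at hω ⊢
  exact ((lt_inv_mul_iff₀ hN).1 hω).le

lemma frobNorm11_le_of_forall_abs_apply_le {M : Matrix (Fin 11) (Fin 11) ℝ} {c : ℝ} (hc : 0 ≤ c)
    (h : ∀ k l, |M k l| ≤ c / 11) : frobNorm11 M ≤ c := by
  refine Real.sqrt_le_iff.2 ⟨hc, ?_⟩
  calc ∑ k, ∑ l, M k l ^ 2 ≤ ∑ _k : Fin 11, ∑ _l : Fin 11, (c / 11) ^ 2 := by
        refine Finset.sum_le_sum fun k _ => Finset.sum_le_sum fun l _ => ?_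
        exact sq_le_sq' (abs_le.1 (h k l)).1 (abs_le.1 (h k l)).2
    _ = c ^ 2 := by
        simp only [Finset.sum_const, Finset.card_univ, Fintype.card_fin, nsmul_eq_mul]
        ring

lemma measure_lt_frobNorm11_le {Ω : Type*} [MeasurableSpace Ω] (μ : Measure Ω)
    (F : Ω → Matrix (Fin 11) (Fin 11) ℝ) {c : ℝ} (hc : 0 ≤ c) {b : ENNReal}
    (h : ∀ k l, μ {ω | c / 11 < |F ω k l|} ≤ b) : μ {ω | c < frobNorm11 (F ω)} ≤ 121 * b := by
  have hsub : {ω | c < frobNorm11 (F ω)}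
      ⊆ ⋃ kl : Fin 11 × Fin 11, {ω | c / 11 < |F ω kl.1 kl.2|} := by
    intro ω hω
    by_contra hcon
    simp only [Set.mem_iUnion, not_exists, Set.mem_ofPred_eq, not_lt] at hcon
    exact (not_le.2 hω) (frobNorm11_le_of_forall_abs_apply_le hc fun k l => hcon (k, l))
  calc μ {ω | c < frobNorm11 (F ω)}
      ≤ ∑ kl : Fin 11 × Fin 11, μ {ω | c / 11 < |F ω kl.1 kl.2|} :=
        (measure_mono hsub).trans (measure_iUnion_fintype_le μ _)
    _ ≤ ∑ _kl : Fin 11 × Fin 11, b := Finset.sum_le_sum fun kl _ => h kl.1 kl.2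
    _ = 121 * b := by simp

lemma tendsto_toReal_measure_lt_frobNorm11 {Ω : Type*} [MeasurableSpace Ω] (μ : Measure Ω)
    (F : ℕ → Ω → Matrix (Fin 11) (Fin 11) ℝ) {c V : ℝ} (hc : 0 ≤ c) (hV : 0 ≤ V)
    (h : ∀ n, 0 < n → ∀ k l, μ {ω | c / 11 < |F n ω k l|} ≤ ENNReal.ofReal (V / n)) :
    Filter.Tendsto (fun n => (μ {ω | c < frobNorm11 (F n ω)}).toReal) Filter.atTop (nhds 0) := by
  refine squeeze_zero' (Filter.Eventually.of_forall fun n => ENNReal.toReal_nonneg) ?_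
    (tendsto_const_div_atTop_nhds_zero_nat (121 * V))
  filter_upwards [Filter.eventually_gt_atTop 0] with n hn
  refine ENNReal.toReal_le_of_le_ofReal (by positivity) ?_
  rw [mul_div_assoc, ENNReal.ofReal_mul (by norm_num)]
  simpa using measure_lt_frobNorm11_le μ (F n) hc (h n hn)

theorem AtA_minus_BtB_bias_converges_general
    {Ω : Type*} [MeasurableSpace Ω] (μ : Measure Ω) [IsProbabilityMeasure μ]
    (fx fy : ℝ)
    (R : Matrix (Fin 3) (Fin 3) ℝ)
    (t : Fin 3 → ℝ)
    (p : ℕ → Fin 3 → ℝ) (K δ : ℝ) (hδ : 0 < δ)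
    (hpK : ∀ i, ‖p i‖ ≤ K)
    (d : ℕ → ℝ) (hdδ : ∀ i, δ ≤ d i)
    (ε : ℕ → Fin 2 → Ω → ℝ) (σ : ℝ)
    (hmeas : ∀ i j, Measurable (ε i j))
    (hindep : iIndepFun (fun ij : ℕ × Fin 2 => ε ij.1 ij.2) μ)
    (hident : ∀ i j, IdentDistrib (ε i j) (ε 0 0) μ μ)
    (hmom4 : ∀ i j, Integrable (fun ω => (ε i j ω) ^ 4) μ)
    (hmean : ∀ i j, ∫ ω, ε i j ω ∂μ = 0)
    (hvar : ∀ i j, ∫ ω, (ε i j ω) ^ 2 ∂μ = σ ^ 2)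
    (qo : ℕ → Fin 2 → ℝ)
    (hqo : ∀ i, qo i = (d i)⁻¹ • (Wmat fx fy * Emat).mulVec (R.mulVec (p i) + t))
    (q : ℕ → Ω → Fin 2 → ℝ)
    (hq : ∀ i ω, q i ω = qo i + fun j => ε i j ω)
    (pbar : ℕ → Fin 3 → ℝ)
    (hpbar : ∀ n : ℕ, pbar n = (n : ℝ)⁻¹ • ∑ i ∈ Finset.range n, p i)
    (A : (n : ℕ) → Ω → Matrix (Fin n × Fin 2) (Fin 11) ℝ)
    (hA : ∀ (n : ℕ) (ω : Ω) (ij : Fin n × Fin 2),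
      A n ω ij = Arow fx fy (q ij.1 ω) (p ij.1) (pbar n) ij.2)
    (B : (n : ℕ) → Matrix (Fin n × Fin 2) (Fin 11) ℝ)
    (hB : ∀ (n : ℕ) (ij : Fin n × Fin 2),
      B n ij = Arow fx fy (qo ij.1) (p ij.1) (pbar n) ij.2)
    (G : (n : ℕ) → Matrix (Fin n × Fin 2) (Fin 11) ℝ)
    (hG : ∀ (n : ℕ) (ij : Fin n × Fin 2), G n ij = Grow (p ij.1) (pbar n)) :
    ∀ η : ℝ, 0 < η →
      Filter.Tendsto
        (fun n : ℕ =>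
          (μ {ω | η < frobNorm11
            ((n : ℝ)⁻¹ • ((A n ω)ᵀ * A n ω - (B n)ᵀ * B n)
              - σ ^ 2 • ((n : ℝ)⁻¹ • ((G n)ᵀ * G n)))}).toReal)
        Filter.atTop (nhds 0) := by
  intro η hη
  obtain ⟨Q, hQ⟩ := exists_norm_inv_smul_mulVec_affine_le (Wmat fx fy * Emat) R t hδ hpK hdδ
  have hpbarK n : ‖pbar n‖ ≤ K := hpbar n ▸ norm_inv_natCast_smul_sum_range_le hpK n
  set C := max (Q * (2 * K) + max |fx| |fy| * (K + 1)) (2 * K)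
  have hBC n r k : |B n r k| ≤ C := hB n r ▸
    (abs_Arow_le (hqo _ ▸ hQ _) (hpK _) (hpbarK n) _ k).trans (le_max_left _ _)
  have hGC n r k : |G n r k| ≤ C := hG n r ▸
    (abs_Grow_le (hpK _) (hpbarK n) k).trans (le_max_right _ _)
  have hAeq n ω : A n ω = B n + diagonal (fun r : Fin n × Fin 2 => ε r.1 r.2 ω) * G n := by
    refine Matrix.ext fun r k => ?_
    rw [Matrix.add_apply, diagonal_mul, hA, hB, hG, hq, Arow_add]
  set m4 := ∫ ω, ε 0 0 ω ^ 4 ∂μ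
  have hnoise : IsPairwiseIndepNoise μ σ m4 fun ij : ℕ × Fin 2 => ε ij.1 ij.2 :=
    { measurable := fun ij => hmeas ij.1 ij.2
      pairwise_indepFun := fun _ _ h => hindep.indepFun h
      integrable_pow_four := fun ij => hmom4 ij.1 ij.2
      integral_pow_four_le := fun ij =>
        ((hident ij.1 ij.2).comp (measurable_id.pow_const 4)).integral_eq.le
      integral_eq_zero := fun ij => hmean ij.1 ij.2
      integral_sq := fun ij => hvar ij.1 ij.2 }
  have hm4 : 0 ≤ m4 := integral_nonneg fun ω => by positivity
  refine tendsto_toReal_measure_lt_frobNorm11 μ _ hη.le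
    (V := 2 * (2 * (2 * C ^ 2) ^ 2 * (σ ^ 2 + m4 + σ ^ 4)) / (η / 11) ^ 2) (by positivity)
    fun n hn k l => ?_
  simp only [hAeq]
  refine (measure_lt_abs_noise_bias_apply_le (hBC n) (hGC n)
    (hnoise.comp (Fin.val_injective.prodMap Function.injective_id)) (Nat.cast_pos.2 hn)
    (by positivity) k l).trans_eq ?_
  congr 1
  simp only [Fintype.card_prod, Fintype.card_fin]
  field_simp
  push_cast
  ring

/-- in the PnP model, `(1/n)(AₙᵀAₙ − BₙᵀBₙ) − σ²(1/n)GₙᵀGₙ` converges in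
probability to the zero `11×11` matrix (Frobenius norm). Rows of the `2n`-row matrices are
indexed by `Fin n × Fin 2`. -/
theorem AtA_minus_BtB_bias_converges
    {Ω : Type*} [MeasurableSpace Ω] (μ : Measure Ω) [IsProbabilityMeasure μ]
    (fx fy : ℝ) (hfx : 0 < fx) (hfy : 0 < fy)
    (R : Matrix (Fin 3) (Fin 3) ℝ) (hRorth : Rᵀ * R = 1) (hRdet : R.det = 1)
    (t : Fin 3 → ℝ)
    (p : ℕ → Fin 3 → ℝ) (K δ : ℝ) (hK : 0 < K) (hδ : 0 < δ)
    (hpK : ∀ i, ‖p i‖ ≤ K)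
    (d : ℕ → ℝ) (hd : ∀ i, d i = (R.mulVec (p i) + t) 2) (hdδ : ∀ i, δ ≤ d i)
    (ε : ℕ → Fin 2 → Ω → ℝ) (σ : ℝ)
    (hmeas : ∀ i j, Measurable (ε i j))
    (hindep : iIndepFun (fun ij : ℕ × Fin 2 => ε ij.1 ij.2) μ)
    (hident : ∀ i j, IdentDistrib (ε i j) (ε 0 0) μ μ)
    (hmom4 : ∀ i j, Integrable (fun ω => (ε i j ω) ^ 4) μ)
    (hmean : ∀ i j, ∫ ω, ε i j ω ∂μ = 0)
    (hvar : ∀ i j, ∫ ω, (ε i j ω) ^ 2 ∂μ = σ ^ 2)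
    (qo : ℕ → Fin 2 → ℝ)
    (hqo : ∀ i, qo i = (d i)⁻¹ • (Wmat fx fy * Emat).mulVec (R.mulVec (p i) + t))
    (q : ℕ → Ω → Fin 2 → ℝ)
    (hq : ∀ i ω, q i ω = qo i + fun j => ε i j ω)
    (pbar : ℕ → Fin 3 → ℝ)
    (hpbar : ∀ n : ℕ, pbar n = (n : ℝ)⁻¹ • ∑ i ∈ Finset.range n, p i)
    (A : (n : ℕ) → Ω → Matrix (Fin n × Fin 2) (Fin 11) ℝ)
    (hA : ∀ (n : ℕ) (ω : Ω) (ij : Fin n × Fin 2),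
      A n ω ij = Arow fx fy (q ij.1 ω) (p ij.1) (pbar n) ij.2)
    (B : (n : ℕ) → Matrix (Fin n × Fin 2) (Fin 11) ℝ)
    (hB : ∀ (n : ℕ) (ij : Fin n × Fin 2),
      B n ij = Arow fx fy (qo ij.1) (p ij.1) (pbar n) ij.2)
    (G : (n : ℕ) → Matrix (Fin n × Fin 2) (Fin 11) ℝ)
    (hG : ∀ (n : ℕ) (ij : Fin n × Fin 2), G n ij = Grow (p ij.1) (pbar n)) :
    ∀ η : ℝ, 0 < η →
      Filter.Tendsto
        (fun n : ℕ =>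
          (μ {ω | η < frobNorm11
            ((n : ℝ)⁻¹ • ((A n ω)ᵀ * A n ω - (B n)ᵀ * B n)
              - σ ^ 2 • ((n : ℝ)⁻¹ • ((G n)ᵀ * G n)))}).toReal)
        Filter.atTop (nhds 0) :=
  AtA_minus_BtB_bias_converges_general μ fx fy R t p K δ hδ hpK d hdδ ε σ hmeas hindep hident hmom4
    hmean hvar qo hqo q hq pbar hpbar A hA B hB G hG
end

section
/- Let R be a real 3×3 matrix with rows r₁ᵀ, r₂ᵀ, r₃ᵀ, let t = (t₁,t₂,t₃)ᵀ ∈ ℝ³, p, p̄ ∈ ℝ³, α ∈ ℝ, and suppose α t₃ = 1 − α p̄ᵀ r₃. Then: (i) α e₃ᵀ(R p + t) = 1 + α(p − p̄)ᵀ r₃; and (ii) if additionally d := e₃ᵀ(R p + t) ≠ 0 and q = W E (R p + t)/d + ε for some q, ε ∈ ℝ², then q = α W E (R p + t) − α (p − p̄)ᵀ r₃ · q + (1 + α(p − p̄)ᵀ r₃) ε. -/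
open Matrix

/-- modified measurement equation after variable elimination: if
`α t₃ = 1 − α p̄ᵀ r₃`, then (i) `α e₃ᵀ(R p + t) = 1 + α (p − p̄)ᵀ r₃`, and (ii) whenever
`d := e₃ᵀ(R p + t) ≠ 0` and `q = W E (R p + t)/d + ε`, one has
`q = α W E (R p + t) − α (p − p̄)ᵀ r₃ · q + (1 + α (p − p̄)ᵀ r₃) ε`. -/
theorem modified_measurement_equation
    (fx fy : ℝ) (hfx : 0 < fx) (hfy : 0 < fy)
    (R : Matrix (Fin 3) (Fin 3) ℝ) (t : Fin 3 → ℝ) (p pbar : Fin 3 → ℝ) (α : ℝ)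
    (helim : α * t 2 = 1 - α * (pbar ⬝ᵥ R 2)) :
    α * (R.mulVec p + t) 2 = 1 + α * ((p - pbar) ⬝ᵥ R 2) ∧
    ∀ (d : ℝ) (q ε : Fin 2 → ℝ),
      d = (R.mulVec p + t) 2 → d ≠ 0 →
      q = d⁻¹ • (Wmat fx fy * Emat).mulVec (R.mulVec p + t) + ε →
      q = α • (Wmat fx fy * Emat).mulVec (R.mulVec p + t)
          - (α * ((p - pbar) ⬝ᵥ R 2)) • q
          + (1 + α * ((p - pbar) ⬝ᵥ R 2)) • ε := by
  have key : α * (R.mulVec p + t) 2 = 1 + α * ((p - pbar) ⬝ᵥ R 2) := by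
    have h1 : (R.mulVec p + t) 2 = p ⬝ᵥ R 2 + t 2 := by
      simp [Matrix.mulVec, Pi.add_apply, dotProduct_comm]
    rw [h1, sub_dotProduct]
    linear_combination helim
  refine ⟨key, ?_⟩
  intro d q ε hd hd0 hq
  have hαd : α * d = 1 + α * ((p - pbar) ⬝ᵥ R 2) := by rw [hd]; exact key
  set v := (Wmat fx fy * Emat).mulVec (R.mulVec p + t) with hv
  set s := α * ((p - pbar) ⬝ᵥ R 2) with hs
  clear_value v s
  subst hq
  funext i
  simp only [Pi.add_apply, Pi.sub_apply, Pi.smul_apply, smul_eq_mul]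
  field_simp
  linear_combination (-(v i)) * hαd
end

section
/- Let M ∈ ℝ^{3×3} admit a singular value decomposition M = U Σ Vᵀ, where U, V are real 3×3 orthogonal matrices (UᵀU = VᵀV = I) and Σ = diag(σ₁, σ₂, σ₃) with σ₁ ≥ σ₂ ≥ σ₃ ≥ 0. Define π(M) = U · diag(1, 1, det(UVᵀ)) · Vᵀ. Then π(M) ∈ SO(3), and for every Q ∈ SO(3), ‖M − π(M)‖_F ≤ ‖M − Q‖_F, i.e., π(M) is a closest element of SO(3) to M in the Frobenius norm. -/
open Matrix Finset

noncomputable def frobNorm (M : Matrix (Fin 3) (Fin 3) ℝ) : ℝ :=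
  Real.sqrt (∑ i, ∑ j, (M i j) ^ 2)

lemma so3_trace_ge (a b c d e f g h i : ℝ)
    (c1 : a^2+d^2+g^2 = 1) (c2 : b^2+e^2+h^2 = 1) (c3 : c^2+f^2+i^2 = 1)
    (c4 : a*b+d*e+g*h = 0) (c5 : a*c+d*f+g*i = 0) (c6 : b*c+e*f+h*i = 0)
    (hdet : a*e*i - a*f*h - b*d*i + b*f*g + c*d*h - c*e*g = 1) :
    -1 ≤ a + e + i := by
  have hA : e*i - f*h = a := by
    linear_combination a*hdet - (e*i-f*h)*c1 - (f*g-d*i)*c4 - (d*h-e*g)*c5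
  have hE : a*i - c*g = e := by
    linear_combination e*hdet - (h*c-i*b)*c4 - (a*i-c*g)*c2 - (g*b-h*a)*c6
  have hI : a*e - b*d = i := by
    linear_combination i*hdet - (b*f-c*e)*c5 - (c*d-a*f)*c6 - (a*e-b*d)*c3
  nlinarith [sq_nonneg (1+a+e+i), sq_nonneg (f-h), sq_nonneg (c-g), sq_nonneg (b-d), c1, c2, c3, hA, hE, hI]

lemma weighted_diag_le (σ₁ σ₂ σ₃ ε : ℝ) (h12 : σ₂ ≤ σ₁) (h23 : σ₃ ≤ σ₂) (h3 : 0 ≤ σ₃)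
    (R : Matrix (Fin 3) (Fin 3) ℝ) (hR : Rᵀ * R = 1) (hdet : R.det = ε)
    (he : ε = 1 ∨ ε = -1) :
    σ₁ * R 0 0 + σ₂ * R 1 1 + σ₃ * R 2 2 ≤ σ₁ + σ₂ + ε * σ₃ := by
  have c1 := congrFun (congrFun hR 0) 0
  have c2 := congrFun (congrFun hR 1) 1
  have c3 := congrFun (congrFun hR 2) 2
  have c4 := congrFun (congrFun hR 0) 1
  have c5 := congrFun (congrFun hR 0) 2
  have c6 := congrFun (congrFun hR 1) 2
  simp [Matrix.mul_apply, Fin.sum_univ_three, Matrix.one_apply] at c1 c2 c3 c4 c5 c6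
  rw [Matrix.det_fin_three] at hdet
  set a := R 0 0; set b := R 0 1; set c := R 0 2
  set d := R 1 0; set e := R 1 1; set f := R 1 2
  set g := R 2 0; set h := R 2 1; set i := R 2 2
  have ha1 : a ≤ 1 := by nlinarith [c1]
  have he1 : e ≤ 1 := by nlinarith [c2]
  have hi1 : i ≤ 1 := by nlinarith [c3]
  have hi2 : -1 ≤ i := by nlinarith [c3]
  rcases he with rfl | rfl
  · have t1 : 0 ≤ σ₁ * (1 - a) := mul_nonneg (h3.trans (h23.trans h12)) (by linarith)
    have t2 : 0 ≤ σ₂ * (1 - e) := mul_nonneg (h3.trans h23) (by linarith)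
    have t3 : 0 ≤ σ₃ * (1 - i) := mul_nonneg h3 (by linarith)
    have expand : σ₁ + σ₂ + 1 * σ₃ - (σ₁ * a + σ₂ * e + σ₃ * i)
        = σ₁ * (1 - a) + σ₂ * (1 - e) + σ₃ * (1 - i) := by ring
    linarith [t1, t2, t3, expand]
  · have key : -1 ≤ -a + -e + -i := by
      apply so3_trace_ge (-a) (-b) (-c) (-d) (-e) (-f) (-g) (-h) (-i)
      · linear_combination c1
      · linear_combination c2
      · linear_combination c3
      · linear_combination c4
      · linear_combination c5
      · linear_combination c6
      · linear_combination -hdet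
    have t1 : 0 ≤ (σ₁ - σ₃) * (1 - a) :=
      mul_nonneg (sub_nonneg.2 (h23.trans h12)) (sub_nonneg.2 ha1)
    have t2 : 0 ≤ (σ₂ - σ₃) * (1 - e) :=
      mul_nonneg (sub_nonneg.2 h23) (sub_nonneg.2 he1)
    have t3 : 0 ≤ σ₃ * (1 - a - e - i) :=
      mul_nonneg h3 (by linarith : (0:ℝ) ≤ 1 - a - e - i)
    have expand : σ₁ + σ₂ + (-1) * σ₃ - (σ₁ * a + σ₂ * e + σ₃ * i)
        = (σ₁ - σ₃) * (1 - a) + (σ₂ - σ₃) * (1 - e) + σ₃ * (1 - a - e - i) := by ring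
    linarith [t1, t2, t3, expand]

lemma trace_diag_mul (d : Fin 3 → ℝ) (R : Matrix (Fin 3) (Fin 3) ℝ) :
    Matrix.trace (Matrix.diagonal d * R) = d 0 * R 0 0 + d 1 * R 1 1 + d 2 * R 2 2 := by
  simp [Matrix.trace, Matrix.diag, Matrix.mul_apply, Matrix.diagonal, Fin.sum_univ_three]

lemma sumSq_eq_trace (A : Matrix (Fin 3) (Fin 3) ℝ) :
    (∑ i, ∑ j, (A i j) ^ 2) = Matrix.trace (Aᵀ * A) := by
  simp [Matrix.trace, Matrix.diag, Matrix.mul_apply, Fin.sum_univ_three, sq]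
  ring

lemma trace_sub_expand (A B : Matrix (Fin 3) (Fin 3) ℝ) :
    Matrix.trace ((A - B)ᵀ * (A - B))
      = Matrix.trace (Aᵀ * A) - 2 * Matrix.trace (Aᵀ * B) + Matrix.trace (Bᵀ * B) := by
  have hBA : Matrix.trace (Bᵀ * A) = Matrix.trace (Aᵀ * B) := by
    rw [← Matrix.trace_transpose (Bᵀ * A), Matrix.transpose_mul, Matrix.transpose_transpose]
  rw [Matrix.transpose_sub, Matrix.sub_mul, Matrix.mul_sub, Matrix.mul_sub,
    Matrix.trace_sub, Matrix.trace_sub, Matrix.trace_sub, hBA]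
  ring

/-- SVD projection onto SO(3): if `M = U Σ Vᵀ` with `U, V` orthogonal and
`Σ = diag(σ₁, σ₂, σ₃)`, `σ₁ ≥ σ₂ ≥ σ₃ ≥ 0`, then `π(M) = U diag(1,1,det(UVᵀ)) Vᵀ` lies in
`SO(3)` and is a closest element of `SO(3)` to `M` in the Frobenius norm. -/
theorem svd_projection_onto_SO3
    (M U V : Matrix (Fin 3) (Fin 3) ℝ)
    (hU : Uᵀ * U = 1) (hV : Vᵀ * V = 1)
    (σ₁ σ₂ σ₃ : ℝ) (h12 : σ₂ ≤ σ₁) (h23 : σ₃ ≤ σ₂) (h3 : 0 ≤ σ₃)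
    (hM : M = U * Matrix.diagonal ![σ₁, σ₂, σ₃] * Vᵀ)
    (P : Matrix (Fin 3) (Fin 3) ℝ)
    (hP : P = U * Matrix.diagonal ![1, 1, (U * Vᵀ).det] * Vᵀ) :
    (Pᵀ * P = 1 ∧ P.det = 1) ∧
    ∀ Q : Matrix (Fin 3) (Fin 3) ℝ, Qᵀ * Q = 1 → Q.det = 1 →
      frobNorm (M - P) ≤ frobNorm (M - Q) := by
  have hUU : U * Uᵀ = 1 := mul_eq_one_comm.mp hU
  have hVV : V * Vᵀ = 1 := mul_eq_one_comm.mp hV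
  set ε := (U * Vᵀ).det with hε
  have hdUV : ε = U.det * V.det := by
    rw [hε, Matrix.det_mul, Matrix.det_transpose]
  have hU2 : U.det * U.det = 1 := by
    have := congrArg Matrix.det hU
    rwa [Matrix.det_mul, Matrix.det_transpose, Matrix.det_one] at this
  have hV2 : V.det * V.det = 1 := by
    have := congrArg Matrix.det hV
    rwa [Matrix.det_mul, Matrix.det_transpose, Matrix.det_one] at this
  have hee : ε * ε = 1 := by
    rw [hdUV]; linear_combination (V.det * V.det) * hU2 + hV2
  have he : ε = 1 ∨ ε = -1 := mul_self_eq_one_iff.mp hee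
  set Sg := Matrix.diagonal ![σ₁, σ₂, σ₃] with hSg
  set D := Matrix.diagonal ![(1:ℝ), 1, ε] with hD
  have hDt : Dᵀ = D := Matrix.diagonal_transpose _
  have hSgt : Sgᵀ = Sg := Matrix.diagonal_transpose _
  have hDD : D * D = 1 := by
    rw [hD, Matrix.diagonal_mul_diagonal]
    have : (fun i => ![(1:ℝ), 1, ε] i * ![(1:ℝ), 1, ε] i) = fun _ => (1:ℝ) := by
      funext j; fin_cases j <;> simp [hee]
    rw [this, Matrix.diagonal_one]
  have collapse : ∀ X : Matrix (Fin 3) (Fin 3) ℝ, Uᵀ * (U * X * Vᵀ) * V = X := by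
    intro X
    calc Uᵀ * (U * X * Vᵀ) * V = (Uᵀ * U) * (X * (Vᵀ * V)) := by
          simp only [Matrix.mul_assoc]
      _ = X := by rw [hU, hV, Matrix.one_mul, Matrix.mul_one]
  -- P is in SO(3)
  have hPt : Pᵀ = V * D * Uᵀ := by
    rw [hP, Matrix.transpose_mul, Matrix.transpose_mul, Matrix.transpose_transpose, hDt,
      Matrix.mul_assoc]
  have hPP : Pᵀ * P = 1 := by
    rw [hPt, hP]
    calc V * D * Uᵀ * (U * D * Vᵀ) = V * (D * ((Uᵀ * U) * (D * Vᵀ))) := by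
          simp only [Matrix.mul_assoc]
      _ = V * ((D * D) * Vᵀ) := by rw [hU, Matrix.one_mul]; simp only [Matrix.mul_assoc]
      _ = V * Vᵀ := by rw [hDD, Matrix.one_mul]
      _ = 1 := hVV
  have hPdet : P.det = 1 := by
    rw [hP, Matrix.det_mul, Matrix.det_mul, Matrix.det_transpose, hD, Matrix.det_diagonal]
    simp [Fin.prod_univ_three]
    linear_combination (-ε) * hdUV + hee
  -- trace computations
  have hMt : Mᵀ = V * Sg * Uᵀ := by
    rw [hM, Matrix.transpose_mul, Matrix.transpose_mul, Matrix.transpose_transpose, hSgt,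
      Matrix.mul_assoc]
  have key_tr : ∀ W : Matrix (Fin 3) (Fin 3) ℝ,
      Matrix.trace (Mᵀ * W) = Matrix.trace (Sg * (Uᵀ * W * V)) := by
    intro W
    rw [hMt]
    calc Matrix.trace (V * Sg * Uᵀ * W) = Matrix.trace (V * (Sg * (Uᵀ * W))) := by
          simp only [Matrix.mul_assoc]
      _ = Matrix.trace ((Sg * (Uᵀ * W)) * V) := Matrix.trace_mul_comm _ _
      _ = Matrix.trace (Sg * (Uᵀ * W * V)) := by simp only [Matrix.mul_assoc]
  have htrP : Matrix.trace (Mᵀ * P) = σ₁ + σ₂ + ε * σ₃ := by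
    rw [key_tr P, hP, collapse D, hSg, trace_diag_mul]
    simp [hD, Matrix.diagonal]
    ring
  have htr3 : ∀ W : Matrix (Fin 3) (Fin 3) ℝ, Wᵀ * W = 1 →
      Matrix.trace (Wᵀ * W) = 3 := by
    intro W hW
    rw [hW, Matrix.trace_one]
    simp
  -- main inequality
  refine ⟨⟨hPP, hPdet⟩, ?_⟩
  intro Q hQ hQdet
  have hQQ : Q * Qᵀ = 1 := mul_eq_one_comm.mp hQ
  set R := Uᵀ * Q * V with hR
  have hRR : Rᵀ * R = 1 := by
    rw [hR, Matrix.transpose_mul, Matrix.transpose_mul, Matrix.transpose_transpose]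
    calc Vᵀ * (Qᵀ * U) * (Uᵀ * Q * V) = Vᵀ * (Qᵀ * ((U * Uᵀ) * (Q * V))) := by
          simp only [Matrix.mul_assoc]
      _ = Vᵀ * ((Qᵀ * Q) * V) := by rw [hUU, Matrix.one_mul]; simp only [Matrix.mul_assoc]
      _ = Vᵀ * V := by rw [hQ, Matrix.one_mul]
      _ = 1 := hV
  have hRdet : R.det = ε := by
    rw [hR, Matrix.det_mul, Matrix.det_mul, Matrix.det_transpose, hQdet, hdUV]
    ring
  have htrQ : Matrix.trace (Mᵀ * Q) = σ₁ * R 0 0 + σ₂ * R 1 1 + σ₃ * R 2 2 := by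
    rw [key_tr Q, ← hR, hSg, trace_diag_mul]
    simp
  have hineq : Matrix.trace (Mᵀ * Q) ≤ Matrix.trace (Mᵀ * P) := by
    rw [htrQ, htrP]
    exact weighted_diag_le σ₁ σ₂ σ₃ ε h12 h23 h3 R hRR hRdet he
  unfold frobNorm
  apply Real.sqrt_le_sqrt
  rw [sumSq_eq_trace, sumSq_eq_trace, trace_sub_expand, trace_sub_expand,
    htr3 P hPP, htr3 Q hQ]
  linarith [hineq]
end
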